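/- arXiv:2208.05139 — 3 statements merged into one kernel-verified Lean document; each statement's English description precedes it below -/
import Mathlib

section
/- Let n_1, r be positive integers and n = n_1·r. Then the rational expression [n!]_q / ( [r!]_{q^{n_1}} · ([n_1!]_q)^r ), i.e., the q-multinomial coefficient [n choose n_1,...,n_1]_q divided by [r!]_{q^{n_1}}, is a polynomial in q with integer coefficients (equivalently, takes integer values at every prime power q). -/
/-!
By the q-Pascal rule, Gaussian binomial coefficients are integer polynomials in `q`.
Telescope in steps of `n₁`:
`[(n₁ (j + 1))!]_q = [n₁ (j + 1) - 1 choose n₁ - 1]_q · [(n₁ - 1)!]_q · [(n₁ j)!]_q · [n₁ (j + 1)]_q`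
and `[n₁ (j + 1)]_q = [j + 1]_{q^{n₁}} · [n₁]_q`, so each step contributes the factor
`[n₁!]_q · [j + 1]_{q^{n₁}}` times a polynomial.
-/

open Finset

/-- The q-analogue `[m]_q = 1 + q + ⋯ + q^{m-1}` as an integer, for integer `q`. -/
def zqInt (q : ℤ) (m : ℕ) : ℤ := ∑ i ∈ Finset.range m, q ^ i

/-- The q-factorial `[m!]_q = ∏_{k=1}^m [k]_q` as an integer, for integer `q`. -/
def zqFact (q : ℤ) (m : ℕ) : ℤ := ∏ k ∈ Finset.range m, zqInt q (k + 1)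

open Polynomial

lemma zqInt_succ (q : ℤ) (m : ℕ) : zqInt q (m + 1) = zqInt q m + q ^ m :=
  sum_range_succ _ _

lemma zqInt_add (q : ℤ) (a b : ℕ) : zqInt q (a + b) = zqInt q a + q ^ a * zqInt q b := by
  induction b with
  | zero => simp [zqInt]
  | succ b ih =>
    rw [← add_assoc, zqInt_succ, zqInt_succ, ih, pow_add]
    ring

lemma zqInt_pow_mul_zqInt (q : ℤ) (a k : ℕ) :
    zqInt (q ^ a) k * zqInt q a = zqInt q (a * k) := by
  induction k with
  | zero => simp [zqInt]
  | succ k ih =>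
    rw [zqInt_succ, mul_add_one, zqInt_add, ← ih, ← pow_mul]
    ring

lemma zqFact_succ (q : ℤ) (m : ℕ) : zqFact q (m + 1) = zqFact q m * zqInt q (m + 1) :=
  prod_range_succ _ _

/-- `qBinom k m` is the Gaussian binomial coefficient `[k + m choose k]_q`. -/
noncomputable def qBinom : ℕ → ℕ → ℤ[X]
  | 0, _ => 1
  | _, 0 => 1
  | k + 1, m + 1 => qBinom k (m + 1) + X ^ (k + 1) * qBinom (k + 1) m

lemma qBinom_eval_mul (q : ℤ) (k m : ℕ) :
    (qBinom k m).eval q * (zqFact q k * zqFact q m) = zqFact q (k + m) := by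
  induction k generalizing m with
  | zero => simp [qBinom, zqFact]
  | succ k ihk =>
    induction m with
    | zero => simp [qBinom, zqFact]
    | succ m ihm =>
      have hleft : (qBinom k (m + 1)).eval q * (zqFact q k * (zqFact q m * zqInt q (m + 1))) =
          zqFact q (k + 1 + m) := by
        rw [← zqFact_succ, ihk, ← add_assoc, Nat.add_right_comm]
      have hpascal :
          zqInt q (k + 1 + m + 1) = zqInt q (k + 1) + q ^ (k + 1) * zqInt q (m + 1) := by
        rw [add_assoc, zqInt_add]
      rw [zqFact_succ q k] at ihm
      rw [qBinom, ← add_assoc, zqFact_succ q (k + 1 + m), hpascal, zqFact_succ q k,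
        zqFact_succ q m]
      simp only [eval_add, eval_mul, eval_pow, eval_X]
      linear_combination zqInt q (k + 1) * hleft + q ^ (k + 1) * zqInt q (m + 1) * ihm

lemma qBinom_prod_eval_mul (q : ℤ) (m r : ℕ) :
    (∏ j ∈ range r, qBinom m ((m + 1) * j)).eval q *
        (zqFact (q ^ (m + 1)) r * zqFact q (m + 1) ^ r) = zqFact q ((m + 1) * r) := by
  induction r with
  | zero => simp [zqFact]
  | succ r ih =>
    have hstep := qBinom_eval_mul q m ((m + 1) * r)
    have hlast := zqInt_pow_mul_zqInt q (m + 1) (r + 1)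
    rw [show (m + 1) * (r + 1) = m + (m + 1) * r + 1 by ring] at hlast ⊢
    rw [prod_range_succ, eval_mul, zqFact_succ (q ^ (m + 1)), pow_succ (zqFact q (m + 1)),
      zqFact_succ q (m + _), ← hlast, ← hstep, ← ih, zqFact_succ q m]
    ring

theorem stmt_4_general (n₁ r n : ℕ) (hn₁ : 0 < n₁) (hmul : n = n₁ * r) :
    ∃ P : Polynomial ℤ, ∀ q : ℤ,
      P.eval q * ((∏ k ∈ Finset.range r, zqInt (q ^ n₁) (k + 1)) * (zqFact q n₁) ^ r)
        = zqFact q n := by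
  obtain ⟨m, rfl⟩ := Nat.exists_eq_succ_of_ne_zero hn₁.ne'
  subst hmul
  exact ⟨_, fun q => qBinom_prod_eval_mul q m r⟩

/-- For positive integers `n₁, r` and `n = n₁·r`, the expression
`[n!]_q / ([r!]_{q^{n₁}} · ([n₁!]_q)^r)` is a polynomial in `q` with integer
coefficients: there is an integer polynomial `P` with
`P(q)·([r!]_{q^{n₁}}·([n₁!]_q)^r) = [n!]_q` for every integer `q`. -/
theorem stmt_4 (n₁ r n : ℕ) (hn₁ : 0 < n₁) (hr : 0 < r) (hmul : n = n₁ * r) :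
    ∃ P : Polynomial ℤ, ∀ q : ℤ,
      P.eval q * ((∏ k ∈ Finset.range r, zqInt (q ^ n₁) (k + 1)) * (zqFact q n₁) ^ r)
        = zqFact q n :=
  stmt_4_general n₁ r n hn₁ hmul
end

section
/- Let G be a group, H a subgroup, K a subgroup, and let S ⊆ G be a complete set of representatives for the double cosets H\G/K. For a representation (λ, W) of H over a field, let Ind denote the space of functions f: G → W with f(hg) = λ(h)f(g) for all h ∈ H, g ∈ G, with G acting by right translation. Then the K-invariants of the subspace of functions supported on finitely many double cosets are isomorphic, via f ↦ (f(g))_{g∈S}, to the direct sum over g ∈ S of the spaces of λ(H ∩ gKg^{-1})-invariant vectors W^{H ∩ gKg^{-1}}. -/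
/-!
A function `f` in the induced space that is `K`-invariant is determined on each double coset
`HsK` by `f s`, since `f (h * s * k) = ρ h (f s)`; and `f s` is fixed by `H ∩ sKs⁻¹` because
`h * s = s * k` for `h = s k s⁻¹`. Conversely a vector `w` fixed by `H ∩ sKs⁻¹` extends to `HsK`
by `h * s * k ↦ ρ h w`: if `h₁ s k₁ = h₂ s k₂` then `h₂⁻¹ h₁ = s (k₂ k₁⁻¹) s⁻¹` fixes `w`.
-/

variable (F G : Type) [Field F] [Group G] (H K : Subgroup G)
  (W : Type) [AddCommGroup W] [Module F W] (ρ : Representation F H W)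

/-- The subspace `W^{H ∩ sKs⁻¹}` of vectors fixed by `λ(H ∩ sKs⁻¹)`. -/
def fixSub (s : G) : Submodule F W where
  carrier := {w | ∀ h : H, (∃ k ∈ K, (h : G) = s * k * s⁻¹) → ρ h w = w}
  add_mem' := by
    intro a b ha hb h hh
    simp [map_add, ha h hh, hb h hh]
  zero_mem' := by intro h _; simp
  smul_mem' := by
    intro c a ha h hh
    simp [map_smul, ha h hh]

/-- The `K`-invariants of the space of `H`-equivariant functions `f : G → W`
(with `G` acting by right translation) supported on finitely many double cosets,
the support condition being recorded on a set `S` of double-coset representatives. -/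
def indK (S : Set G) : Submodule F (G → W) where
  carrier := {f | (∀ (h : H) (g : G), f ((h : G) * g) = ρ h (f g)) ∧
    (∀ k ∈ K, ∀ g : G, f (g * k) = f g) ∧ {s : S | f s ≠ 0}.Finite}
  add_mem' := by
    rintro a b ⟨ha1, ha2, ha3⟩ ⟨hb1, hb2, hb3⟩
    refine ⟨fun h g => by simp [ha1 h g, hb1 h g],
      fun k hk g => by simp [ha2 k hk g, hb2 k hk g], ?_⟩
    refine (ha3.union hb3).subset ?_
    intro s hs
    by_contra hc
    simp only [Set.mem_union, Set.mem_setOf_eq, not_or, not_not] at hc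
    exact hs (by simp [Pi.add_apply, hc.1, hc.2])
  zero_mem' := by
    refine ⟨by simp, by simp, ?_⟩
    simp
  smul_mem' := by
    rintro c a ⟨h1, h2, h3⟩
    refine ⟨fun h g => by simp [h1 h g], fun k hk g => by simp [h2 k hk g], ?_⟩
    refine h3.subset ?_
    intro s hs
    simp only [Set.mem_setOf_eq, Pi.smul_apply] at hs ⊢
    intro h0
    exact hs (by simp [h0])

section Mackey

variable {F G}

def IsDoubleCosetTransversal (S : Set G) : Prop :=
  ∀ g : G, ∃! s, s ∈ S ∧ ∃ h ∈ H, ∃ k ∈ K, g = h * s * k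

variable {H K W ρ}

theorem apply_eq_of_mem_fixSub {s : G} {w : W} (hw : w ∈ fixSub F G H K W ρ s)
    {h₁ h₂ : H} {k₁ k₂ : K} (heq : (h₁ : G) * s * k₁ = h₂ * s * k₂) :
    ρ h₁ w = ρ h₂ w := by
  have hh₁ : (h₁ : G) = h₂ * s * k₂ * (k₁ : G)⁻¹ * s⁻¹ := by
    rw [← heq, mul_inv_cancel_right, mul_inv_cancel_right]
  have hfix : ρ (h₂⁻¹ * h₁) w = w := hw _ ⟨_, (k₂ * k₁⁻¹ : K).2, by simp [hh₁]; group⟩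
  conv_rhs => rw [← hfix, ← Module.End.mul_apply, ← map_mul, mul_inv_cancel_left]

theorem apply_eq_of_mem_indK {S : Set G} {f : G → W} (hf : f ∈ indK F G H K W ρ S)
    {g s : G} {h : H} {k : K} (hg : g = h * s * k) : f g = ρ h (f s) := by
  rw [hg, mul_assoc, hf.1, hf.2.1 k k.2]

theorem apply_mem_fixSub_of_mem_indK {S : Set G} {f : G → W}
    (hf : f ∈ indK F G H K W ρ S) (s : G) : f s ∈ fixSub F G H K W ρ s := by
  rintro h ⟨k, hk, hhk⟩
  rw [← apply_eq_of_mem_indK hf (g := s * k) (k := 1) (by simp [hhk]), hf.2.1 k hk]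

open Classical in
noncomputable def evalOnReps {S : Set G} (f : indK F G H K W ρ S) :
    Π₀ s : S, fixSub F G H K W ρ (s : G) :=
  DFinsupp.mk f.2.2.2.toFinset fun s => ⟨f.1 s, apply_mem_fixSub_of_mem_indK f.2 s⟩

@[simp]
theorem evalOnReps_apply {S : Set G} (f : indK F G H K W ρ S) (s : S) :
    (evalOnReps f s : W) = f.1 s := by
  classical
  rw [evalOnReps, DFinsupp.mk_apply]
  split_ifs with hs
  · rfl
  · simpa [eq_comm] using hs

namespace IsDoubleCosetTransversal

variable {S : Set G} (hS : IsDoubleCosetTransversal H K S)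
include hS

theorem exists_eq_mul_mul (g : G) : ∃ p : S × H × K, g = p.2.1 * p.1 * p.2.2 := by
  obtain ⟨s, ⟨hs, h, hh, k, hk, hg⟩, -⟩ := hS g
  exact ⟨(⟨s, hs⟩, ⟨h, hh⟩, ⟨k, hk⟩), hg⟩

noncomputable def decomp (g : G) : S × H × K := (hS.exists_eq_mul_mul g).choose

theorem eq_decomp (g : G) :
    g = (hS.decomp g).2.1 * (hS.decomp g).1 * (hS.decomp g).2.2 :=
  (hS.exists_eq_mul_mul g).choose_spec

theorem decomp_fst_eq {g : G} {s : S} {h : H} {k : K} (hg : g = h * s * k) :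
    (hS.decomp g).1 = s :=
  Subtype.ext <| (hS g).unique
    ⟨(hS.decomp g).1.2, _, (hS.decomp g).2.1.2, _, (hS.decomp g).2.2.2, hS.eq_decomp g⟩
    ⟨s.2, h, h.2, k, k.2, hg⟩

noncomputable def extend (v : Π₀ s : S, fixSub F G H K W ρ (s : G)) (g : G) : W :=
  ρ (hS.decomp g).2.1 (v (hS.decomp g).1)

variable (v : Π₀ s : S, fixSub F G H K W ρ (s : G))

theorem extend_apply_of_eq {g : G} {s : S} {h : H} {k : K} (hg : g = h * s * k) :
    hS.extend v g = ρ h (v s) := by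
  have hs := hS.decomp_fst_eq hg
  rw [extend, hs]
  apply apply_eq_of_mem_fixSub (v s).2
  conv_lhs => rw [← hs, ← hS.eq_decomp]
  exact hg

theorem extend_apply_coe (s : S) : hS.extend v s = v s := by
  simpa using hS.extend_apply_of_eq v (s := s) (h := 1) (k := 1) (by simp)

theorem extend_mem_indK : hS.extend v ∈ indK F G H K W ρ S := by
  refine ⟨fun h₀ g => ?_, fun k₀ hk₀ g => ?_, ?_⟩
  · rw [hS.extend_apply_of_eq v (h := h₀ * (hS.decomp g).2.1) (s := (hS.decomp g).1)
      (k := (hS.decomp g).2.2)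
      (by simp only [Subgroup.coe_mul, mul_assoc, ← hS.eq_decomp g]), map_mul]
    rfl
  · exact hS.extend_apply_of_eq v (h := (hS.decomp g).2.1)
      (s := (hS.decomp g).1) (k := (hS.decomp g).2.2 * ⟨k₀, hk₀⟩)
      (by rw [Subgroup.coe_mul, ← mul_assoc, ← hS.eq_decomp g])
  · classical
    refine v.support.finite_toSet.subset fun s hs => ?_
    simpa [extend_apply_coe] using hs

noncomputable def indKEquiv :
    indK F G H K W ρ S ≃ₗ[F] Π₀ s : S, fixSub F G H K W ρ (s : G) where
  toFun := evalOnReps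
  map_add' f₁ f₂ := by ext; simp
  map_smul' c f := by ext; simp
  invFun v := ⟨hS.extend v, hS.extend_mem_indK v⟩
  left_inv f := Subtype.ext <| funext fun g => by
    change hS.extend (evalOnReps f) g = f.1 g
    rw [extend, evalOnReps_apply, ← apply_eq_of_mem_indK f.2 (hS.eq_decomp g)]
  right_inv v := by ext s; simp [extend_apply_coe]

end IsDoubleCosetTransversal

end Mackey

/-- Mackey-type formula: if `S` is a complete set of representatives for the double cosets
`H\G/K`, then evaluation `f ↦ (f(s))_{s∈S}` is a linear isomorphism from the finitely
supported `K`-invariant induced space onto `⊕_{s∈S} W^{H ∩ sKs⁻¹}`. -/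
theorem stmt_7 (S : Set G)
    (hS : ∀ g : G, ∃! s, s ∈ S ∧ ∃ h ∈ H, ∃ k ∈ K, g = h * s * k) :
    ∃ e : (indK F G H K W ρ S) ≃ₗ[F] (Π₀ s : S, fixSub F G H K W ρ (s : G)),
      ∀ (f : indK F G H K W ρ S) (s : S), ((e f) s : W) = (f : G → W) (s : G) :=
  ⟨IsDoubleCosetTransversal.indKEquiv hS, evalOnReps_apply⟩
end

section
/- Let q > 1 be a real number and n a positive integer. For the sum over all partitions (a_1 ≥ a_2 ≥ ... ≥ a_n = 0) of integers with consecutive gaps a_i - a_{i+1} < N, the quantity ∑ q^{∑_{i<j} min(a_i - a_j, N)} grows like q^{(n(n-1)/2)·N}: there exist constants 0 < c < C (depending on n and q but not N) such that c·q^{(n(n-1)/2)N} ≤ ∑_{a_1≥...≥a_n=0, a_i - a_{i+1} < N} q^{∑_{i<j} min(a_i-a_j, N)} ≤ C·q^{(n(n-1)/2)N} for all sufficiently large N. -/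
open Finset

/-!
Encode a partition `a₁ ≥ ⋯ ≥ aₙ = 0` by its gap vector `g ∈ [0, N)ⁿ⁻¹`, so that `a` is the vector of
tail sums of `g`. With `K = n(n-1)/2`, the exponent `∑_{i<j} min (aᵢ - aⱼ) N` equals `K N` minus the
deficit `∑_{i<j} (N - (aᵢ - aⱼ))` (truncated subtraction absorbs the `min`), so the sum is
`q^{K N}` times `∑_g q^{-deficit}`. When every gap is `N - 1` each term of the deficit is at most `1`,
which gives the lower bound `q^{-K}`. The adjacent pairs alone contribute `∑_k (N - g_k)` to the
deficit, so the normalised sum is at most `∏_k ∑_{t<N} q^{-(N-t)} ≤ (1 - q⁻¹)^{-(n-1)}`.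
-/

section TailSum

variable {m : ℕ}

def gaps (a : Fin (m + 1) → ℕ) (k : Fin m) : ℕ := a k.castSucc - a k.succ

def tailSum (g : Fin m → ℕ) (i : Fin (m + 1)) : ℕ := ∑ k with i ≤ k.castSucc, g k

lemma tailSum_last (g : Fin m → ℕ) : tailSum g (Fin.last m) = 0 :=
  sum_eq_zero fun k hk => absurd (mem_filter.1 hk).2 (not_le.2 k.castSucc_lt_last)

lemma tailSum_castSucc (g : Fin m → ℕ) (k : Fin m) :
    tailSum g k.castSucc = g k + tailSum g k.succ := by
  have h : univ.filter (fun j : Fin m => k.castSucc ≤ j.castSucc) =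
      insert k (univ.filter fun j : Fin m => k.succ ≤ j.castSucc) := by
    ext j
    simp only [mem_filter, mem_univ, true_and, mem_insert, Fin.le_def, Fin.val_castSucc,
      Fin.val_succ, Fin.ext_iff]
    omega
  rw [tailSum, h, sum_insert (by simp [Fin.le_def])]
  rfl

lemma antitone_tailSum (g : Fin m → ℕ) : Antitone (tailSum g) := fun _ _ hij =>
  sum_le_sum_of_subset fun _ hk => by
    simp only [mem_filter, mem_univ, true_and] at hk ⊢
    exact hij.trans hk

lemma gaps_tailSum (g : Fin m → ℕ) : gaps (tailSum g) = g := by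
  ext k
  simp [gaps, tailSum_castSucc]

lemma tailSum_gaps {a : Fin (m + 1) → ℕ} (ha : Antitone a) (hlast : a (Fin.last m) = 0) :
    tailSum (gaps a) = a := by
  funext i
  induction i using Fin.reverseInduction with
  | last => rw [tailSum_last, hlast]
  | cast k ih =>
    have hmono := ha k.castSucc_le_succ
    rw [tailSum_castSucc, ih, gaps]
    omega

lemma tailSum_injective : Function.Injective (tailSum : (Fin m → ℕ) → Fin (m + 1) → ℕ) :=
  Function.LeftInverse.injective gaps_tailSum

end TailSum

def boundedGapPartitions (m N : ℕ) : Set (Fin (m + 1) → ℕ) :=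
  {a | Antitone a ∧ a (Fin.last m) = 0 ∧ ∀ k, gaps a k < N}

lemma boundedGapPartitions_eq_image (m N : ℕ) :
    boundedGapPartitions m N = tailSum '' ↑(Fintype.piFinset fun _ : Fin m => range N) := by
  ext a
  constructor
  · rintro ⟨ha, hlast, hgap⟩
    exact ⟨gaps a, by simpa using hgap, tailSum_gaps ha hlast⟩
  · rintro ⟨g, hg, rfl⟩
    refine ⟨antitone_tailSum g, tailSum_last g, ?_⟩
    simpa [gaps_tailSum] using hg

lemma setOf_eq_boundedGapPartitions (m N : ℕ) (hm : m + 1 - 1 < m + 1) :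
    {a : Fin (m + 1) → ℕ | Antitone a ∧ a ⟨m + 1 - 1, hm⟩ = 0 ∧
      ∀ i : Fin (m + 1), ∀ h : i.1 + 1 < m + 1, a i - a ⟨i.1 + 1, h⟩ < N} =
      boundedGapPartitions m N := by
  ext a
  refine and_congr Iff.rfl (and_congr Iff.rfl ⟨fun h k => h k.castSucc k.succ.isLt, ?_⟩)
  intro h i hi
  exact h ⟨i, by omega⟩

def ascPairs (n : ℕ) : Finset (Fin n × Fin n) := univ.offDiag.filter fun p => p.1 < p.2

lemma card_ascPairs (n : ℕ) : #(ascPairs n) = n * (n - 1) / 2 := by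
  have h := Sym2.card_image_offDiag (univ : Finset (Fin n))
  rw [← Sym2.filter_image_mk_not_isDiag, ← sym2_eq_image, card_univ, Fintype.card_fin,
    Nat.choose_two_right, card_eq_sum_ones, sum_sym2_filter_not_isDiag] at h
  rw [ascPairs, card_eq_sum_ones, h]

section Deficit

variable {n : ℕ} (N : ℕ)

def deficit (a : Fin n → ℕ) : ℕ := ∑ p ∈ ascPairs n, (N - (a p.1 - a p.2))

lemma sum_min_add_deficit (a : Fin n → ℕ) :
    ∑ p ∈ ascPairs n, min (a p.1 - a p.2) N + deficit N a = #(ascPairs n) * N := by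
  rw [deficit, ← sum_add_distrib, ← smul_eq_mul, ← sum_const]
  exact sum_congr rfl fun _ _ => by omega

lemma pow_sum_min_eq {q : ℝ} (hq : q ≠ 0) (a : Fin n → ℕ) :
    q ^ (∑ p ∈ ascPairs n, min (a p.1 - a p.2) N) =
      q ^ (#(ascPairs n) * N) * q⁻¹ ^ deficit N a := by
  rw [← sum_min_add_deficit N a, pow_add, inv_pow, mul_inv_cancel_right₀ (pow_ne_zero _ hq)]

lemma sum_sub_gaps_le_deficit {m : ℕ} (a : Fin (m + 1) → ℕ) :
    ∑ k, (N - gaps a k) ≤ deficit N a := by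
  let e : Fin m → Fin (m + 1) × Fin (m + 1) := fun k => (k.castSucc, k.succ)
  have he : Function.Injective e := fun _ _ hkl =>
    Fin.castSucc_injective _ (congrArg Prod.fst hkl)
  have hsub : univ.image e ⊆ ascPairs (m + 1) := by
    rintro _ hp
    obtain ⟨k, -, rfl⟩ := mem_image.1 hp
    simp [ascPairs, e, Fin.castSucc_lt_succ.ne]
  calc ∑ k, (N - gaps a k) = ∑ p ∈ univ.image e, (N - (a p.1 - a p.2)) := by
        rw [sum_image fun k _ l _ hkl => he hkl]
        rfl
    _ ≤ deficit N a := sum_le_sum_of_subset hsub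

lemma deficit_le_card {m : ℕ} {a : Fin (m + 1) → ℕ} (ha : Antitone a)
    (hgap : ∀ k, N - 1 ≤ gaps a k) : deficit N a ≤ #(ascPairs (m + 1)) := by
  refine (sum_le_card_nsmul _ _ 1 fun p hp => ?_).trans (by simp)
  have hlt : p.1 < p.2 := (mem_filter.1 hp).2
  obtain ⟨k, hk⟩ : ∃ k : Fin m, k.castSucc = p.1 :=
    ⟨_, Fin.castSucc_castPred _ (Fin.ne_last_of_lt hlt)⟩
  have hmono : a p.2 ≤ a k.succ := ha (Fin.castSucc_lt_iff_succ_le.1 (hk ▸ hlt))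
  have hk_gap := hgap k
  rw [gaps, hk] at hk_gap
  omega

end Deficit

section WeightSums

variable {m : ℕ} {r : ℝ}

lemma sum_range_pow_sub_le (hr0 : 0 ≤ r) (hr1 : r < 1) (N : ℕ) :
    ∑ t ∈ range N, r ^ (N - t) ≤ (1 - r)⁻¹ :=
  calc ∑ t ∈ range N, r ^ (N - t) ≤ ∑ t ∈ range N, r ^ (N - 1 - t) :=
        sum_le_sum fun t _ => pow_le_pow_of_le_one hr0 hr1.le (by omega)
    _ = ∑ t ∈ range N, r ^ t := sum_range_reflect (fun t => r ^ t) N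
    _ ≤ (1 - r)⁻¹ := by
        have := geom_sum_Ico_le_of_lt_one (m := 0) (n := N) hr0 hr1
        rwa [← range_eq_Ico, pow_zero, one_div] at this

lemma pow_card_le_sum_pow_deficit (hr0 : 0 ≤ r) (hr1 : r ≤ 1) {N : ℕ} (hN : 0 < N) :
    r ^ #(ascPairs (m + 1)) ≤
      ∑ g ∈ Fintype.piFinset (fun _ : Fin m => range N), r ^ deficit N (tailSum g) := by
  have hmem : (fun _ : Fin m => N - 1) ∈ Fintype.piFinset (fun _ : Fin m => range N) := by
    simp [hN]
  refine le_trans ?_ (single_le_sum (fun g _ => pow_nonneg hr0 _) hmem)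
  refine pow_le_pow_of_le_one hr0 hr1 (deficit_le_card N (antitone_tailSum _) fun k => ?_)
  rw [gaps_tailSum]

lemma sum_pow_deficit_le (hr0 : 0 ≤ r) (hr1 : r < 1) (N : ℕ) :
    ∑ g ∈ Fintype.piFinset (fun _ : Fin m => range N), r ^ deficit N (tailSum g) ≤
      (1 - r)⁻¹ ^ m :=
  calc ∑ g ∈ Fintype.piFinset (fun _ : Fin m => range N), r ^ deficit N (tailSum g)
      ≤ ∑ g ∈ Fintype.piFinset (fun _ : Fin m => range N), ∏ k, r ^ (N - g k) := by
        refine sum_le_sum fun g _ => ?_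
        rw [prod_pow_eq_pow_sum]
        refine pow_le_pow_of_le_one hr0 hr1.le ?_
        simpa [gaps_tailSum] using sum_sub_gaps_le_deficit N (tailSum g)
    _ = ∏ _k : Fin m, ∑ t ∈ range N, r ^ (N - t) :=
        (prod_univ_sum (fun _ : Fin m => range N) fun _ t => r ^ (N - t)).symm
    _ ≤ ∏ _k : Fin m, (1 - r)⁻¹ :=
        prod_le_prod (fun _ _ => sum_nonneg fun _ _ => pow_nonneg hr0 _)
          fun _ _ => sum_range_pow_sub_le hr0 hr1 N
    _ = (1 - r)⁻¹ ^ m := by simp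

end WeightSums

lemma finsum_boundedGapPartitions_eq {q : ℝ} (hq : q ≠ 0) (m N : ℕ) :
    ∑ᶠ a ∈ boundedGapPartitions m N, q ^ (∑ p ∈ ascPairs (m + 1), min (a p.1 - a p.2) N) =
      q ^ (#(ascPairs (m + 1)) * N) *
        ∑ g ∈ Fintype.piFinset (fun _ : Fin m => range N), q⁻¹ ^ deficit N (tailSum g) := by
  rw [boundedGapPartitions_eq_image, finsum_mem_image tailSum_injective.injOn,
    finsum_mem_coe_finset, mul_sum]
  exact sum_congr rfl fun g _ => pow_sum_min_eq N hq (tailSum g)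

/-- The sum `∑ q^{∑_{i<j} min(aᵢ-aⱼ, N)}` over partitions `a₁ ≥ ⋯ ≥ aₙ = 0` with
consecutive gaps `aᵢ - aᵢ₊₁ < N` grows like `q^{(n(n-1)/2)·N}`. -/
theorem stmt_16 (q : ℝ) (hq : 1 < q) (n : ℕ) (hn : 0 < n) :
    ∃ c C : ℝ, 0 < c ∧ c < C ∧ ∃ N₀ : ℕ, ∀ N : ℕ, N₀ ≤ N →
      c * q ^ (n * (n - 1) / 2 * N) ≤
        (∑ᶠ a ∈ {a : Fin n → ℕ | Antitone a ∧ a ⟨n - 1, by omega⟩ = 0 ∧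
            ∀ i : Fin n, ∀ h : i.1 + 1 < n, a i - a ⟨i.1 + 1, h⟩ < N},
          (q ^ (∑ p ∈ Finset.univ.offDiag.filter (fun p : Fin n × Fin n => p.1 < p.2),
            min (a p.1 - a p.2) N) : ℝ)) ∧
      (∑ᶠ a ∈ {a : Fin n → ℕ | Antitone a ∧ a ⟨n - 1, by omega⟩ = 0 ∧
            ∀ i : Fin n, ∀ h : i.1 + 1 < n, a i - a ⟨i.1 + 1, h⟩ < N},
          (q ^ (∑ p ∈ Finset.univ.offDiag.filter (fun p : Fin n × Fin n => p.1 < p.2),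
            min (a p.1 - a p.2) N) : ℝ)) ≤ C * q ^ (n * (n - 1) / 2 * N) := by
  obtain ⟨m, rfl⟩ : ∃ m, n = m + 1 := ⟨n - 1, by omega⟩
  have hr0 : 0 ≤ q⁻¹ := by positivity
  have hr1 : q⁻¹ < 1 := inv_lt_one_of_one_lt₀ hq
  refine ⟨q⁻¹ ^ #(ascPairs (m + 1)), (1 - q⁻¹)⁻¹ ^ m + q⁻¹ ^ #(ascPairs (m + 1)),
    by positivity, lt_add_of_pos_left _ (pow_pos (inv_pos.2 (sub_pos.2 hr1)) m), 1,
    fun N hN => ?_⟩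
  rw [setOf_eq_boundedGapPartitions, ← card_ascPairs, show univ.offDiag.filter
    (fun p : Fin (m + 1) × Fin (m + 1) => p.1 < p.2) = ascPairs (m + 1) from rfl,
    finsum_boundedGapPartitions_eq (by positivity), mul_comm _ (q ^ _)]
  have hpow : 0 ≤ q ^ (#(ascPairs (m + 1)) * N) := by positivity
  refine ⟨mul_le_mul_of_nonneg_left (pow_card_le_sum_pow_deficit hr0 hr1.le hN) hpow, ?_⟩
  calc _ ≤ q ^ (#(ascPairs (m + 1)) * N) * (1 - q⁻¹)⁻¹ ^ m :=
        mul_le_mul_of_nonneg_left (sum_pow_deficit_le hr0 hr1 N) hpow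
    _ ≤ _ := by
        rw [mul_comm]
        exact mul_le_mul_of_nonneg_right (le_add_of_nonneg_right (by positivity)) hpow
end
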